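/- arXiv:1803.00866 — 2 statements merged into one kernel-verified Lean document; each statement's English description precedes it below -/
import Mathlib

section
/- Let n ≥ 2. If f ∈ T_n has finite order m, then there exists a nonnegative integer l such that m divides l(n−1)+1. -/
noncomputable section

namespace ThompsonPaper

/-- The circle `ℝ/ℤ`. -/
abbrev Circle : Type := AddCircle (1 : ℝ)

/-- Homeomorphisms of a topological space form a group under composition,
with `(f * g) x = f (g x)`. -/
instance homeoGroup {α : Type*} [TopologicalSpace α] : Group (α ≃ₜ α) where
  mul f g := g.trans f
  one := Homeomorph.refl α
  inv := Homeomorph.symm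
  mul_assoc _ _ _ := Homeomorph.ext fun _ => rfl
  one_mul _ := Homeomorph.ext fun _ => rfl
  mul_one _ := Homeomorph.ext fun _ => rfl
  inv_mul_cancel f := Homeomorph.ext fun x => f.symm_apply_apply x

/-- `x` is an `n`-adic rational: `x = a / n ^ k` with `a` an integer, `k` a natural number. -/
def IsNAdic (n : ℕ) (x : ℝ) : Prop := ∃ a : ℤ, ∃ k : ℕ, x = (a : ℝ) / (n : ℝ) ^ k

/-- The set of `n`-adic points of the circle. -/
def nAdicPoints (n : ℕ) : Set Circle := { p | ∃ x : ℝ, IsNAdic n x ∧ p = (x : Circle) }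

/-- `F : ℝ → ℝ` is a lift of the circle map `f`. -/
def IsLift (f : Circle ≃ₜ Circle) (F : ℝ → ℝ) : Prop :=
  ∀ x : ℝ, f (x : Circle) = ((F x : ℝ) : Circle)

/-- `F : ℝ → ℝ` commutes with translation by `1` and is piecewise affine with finitely
many breakpoints (modulo `1`), all breakpoints at `n`-adic rationals, and with the slope
of every affine piece an integer power of `n`. -/
def PiecewiseNAffine (n : ℕ) (F : ℝ → ℝ) : Prop :=
  (∀ x : ℝ, F (x + 1) = F x + 1) ∧
  ∃ m : ℕ, ∃ t : ℕ → ℝ, ∃ slope : ℕ → ℤ, ∃ c : ℕ → ℝ,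
    0 < m ∧ t 0 = 0 ∧ t m = 1 ∧
    (∀ i, i < m → t i < t (i + 1)) ∧
    (∀ i, i ≤ m → IsNAdic n (t i)) ∧
    (∀ i, i < m → ∀ x ∈ Set.Icc (t i) (t (i + 1)),
      F x = (n : ℝ) ^ (slope i) * x + c i)

/-- Membership in Thompson's group `T_n`: an orientation-preserving homeomorphism of the
circle `ℝ/ℤ` mapping the set of `n`-adic points onto itself, which is piecewise affine
with finitely many breakpoints, all breakpoints at `n`-adic points, and all slopes integer
powers of `n`.  (Orientation preservation and the piecewise affine structure are expressed
through a strictly increasing lift.) -/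
def InT (n : ℕ) (f : Circle ≃ₜ Circle) : Prop :=
  f '' nAdicPoints n = nAdicPoints n ∧
  ∃ F : ℝ → ℝ, StrictMono F ∧ IsLift f F ∧ PiecewiseNAffine n F

/-- Thompson's group `T_n`, as a set of circle homeomorphisms. -/
def TnSet (n : ℕ) : Set (Circle ≃ₜ Circle) := { f | InT n f }

/-! The numerator of an `n`-adic rational modulo `n - 1` is well defined, additive and
invariant under multiplication by powers of `n`, since `n ≡ 1 (mod n - 1)`. Along each affine
piece of a lift `F` of `f ∈ T_n` the difference `F x - x` therefore keeps its residue, so this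
residue is a constant `c` and the residue of `F^[m] x - x` is `m * c`. If `f` has order `m`, then
`F^[m]` is the translation by an integer `d` coprime to `m` (the rotation number `d / m` of `f`
is in lowest terms), and `d ≡ m * c (mod n - 1)`. Hence `m` is coprime to `n - 1`, and `l` is
any natural number with `l * (n - 1) ≡ -1 (mod m)`. -/

open Set

section

variable {n : ℕ}

theorem natCast_eq_one_zmod_sub_one (hn : n ≠ 0) : (n : ZMod (n - 1)) = 1 := by
  obtain ⟨k, rfl⟩ := Nat.exists_eq_succ_of_ne_zero hn
  simp

theorem isNAdic_intCast (j : ℤ) : IsNAdic n j := ⟨j, 0, by simp⟩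

theorem IsNAdic.neg {x : ℝ} (hx : IsNAdic n x) : IsNAdic n (-x) := by
  obtain ⟨a, k, rfl⟩ := hx
  exact ⟨-a, k, by push_cast; ring⟩

theorem div_pow_add_div_pow (hn : n ≠ 0) (a b : ℤ) (k j : ℕ) :
    (a : ℝ) / (n : ℝ) ^ k + b / (n : ℝ) ^ j =
      ((a * n ^ j + b * n ^ k : ℤ) : ℝ) / (n : ℝ) ^ (k + j) := by
  push_cast
  field_simp
  ring

theorem zpow_mul_div_pow (hn : n ≠ 0) (s : ℤ) (a : ℤ) (k : ℕ) :
    (n : ℝ) ^ s * ((a : ℝ) / (n : ℝ) ^ k) =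
      ((a * n ^ s.toNat : ℤ) : ℝ) / (n : ℝ) ^ (k + (-s).toNat) := by
  rcases Int.eq_nat_or_neg s with ⟨t, rfl | rfl⟩ <;> simp [zpow_neg, pow_add] <;> field_simp

theorem IsNAdic.add (hn : n ≠ 0) {x y : ℝ} (hx : IsNAdic n x) (hy : IsNAdic n y) :
    IsNAdic n (x + y) := by
  obtain ⟨a, k, rfl⟩ := hx
  obtain ⟨b, j, rfl⟩ := hy
  exact ⟨_, _, div_pow_add_div_pow hn a b k j⟩

theorem IsNAdic.sub (hn : n ≠ 0) {x y : ℝ} (hx : IsNAdic n x) (hy : IsNAdic n y) :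
    IsNAdic n (x - y) := by
  simpa only [sub_eq_add_neg] using hx.add hn hy.neg

theorem IsNAdic.zpow_mul (hn : n ≠ 0) (s : ℤ) {x : ℝ} (hx : IsNAdic n x) :
    IsNAdic n ((n : ℝ) ^ s * x) := by
  obtain ⟨a, k, rfl⟩ := hx
  exact ⟨_, _, zpow_mul_div_pow hn s a k⟩

theorem intCast_eq_of_div_pow_eq (hn : n ≠ 0) {a b : ℤ} {k j : ℕ}
    (h : (a : ℝ) / (n : ℝ) ^ k = b / (n : ℝ) ^ j) : (a : ZMod (n - 1)) = b := by
  rw [div_eq_div_iff (by positivity) (by positivity)] at h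
  have h' := congrArg (Int.cast : ℤ → ZMod (n - 1))
    (show a * n ^ j = b * n ^ k by exact_mod_cast h)
  simpa [natCast_eq_one_zmod_sub_one hn] using h'

open Classical in
/-- The numerator `a` of `x = a / n ^ k` modulo `n - 1`, and `0` if `x` is not `n`-adic. -/
def nAdicResidue (n : ℕ) (x : ℝ) : ZMod (n - 1) :=
  if h : IsNAdic n x then (h.choose : ZMod (n - 1)) else 0

theorem nAdicResidue_div_pow (hn : n ≠ 0) (a : ℤ) (k : ℕ) :
    nAdicResidue n ((a : ℝ) / (n : ℝ) ^ k) = a := by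
  have h : IsNAdic n ((a : ℝ) / (n : ℝ) ^ k) := ⟨a, k, rfl⟩
  rw [nAdicResidue, dif_pos h]
  obtain ⟨j, hj⟩ := h.choose_spec
  exact intCast_eq_of_div_pow_eq hn hj.symm

theorem nAdicResidue_intCast (hn : n ≠ 0) (j : ℤ) : nAdicResidue n j = j := by
  simpa using nAdicResidue_div_pow hn j 0

theorem nAdicResidue_add (hn : n ≠ 0) {x y : ℝ} (hx : IsNAdic n x) (hy : IsNAdic n y) :
    nAdicResidue n (x + y) = nAdicResidue n x + nAdicResidue n y := by
  obtain ⟨a, k, rfl⟩ := hx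
  obtain ⟨b, j, rfl⟩ := hy
  rw [div_pow_add_div_pow hn, nAdicResidue_div_pow hn, nAdicResidue_div_pow hn,
    nAdicResidue_div_pow hn]
  simp [natCast_eq_one_zmod_sub_one hn]

theorem nAdicResidue_neg (hn : n ≠ 0) {x : ℝ} (hx : IsNAdic n x) :
    nAdicResidue n (-x) = -nAdicResidue n x := by
  obtain ⟨a, k, rfl⟩ := hx
  rw [← neg_div, ← Int.cast_neg, nAdicResidue_div_pow hn, nAdicResidue_div_pow hn, Int.cast_neg]

theorem nAdicResidue_sub (hn : n ≠ 0) {x y : ℝ} (hx : IsNAdic n x) (hy : IsNAdic n y) :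
    nAdicResidue n (x - y) = nAdicResidue n x - nAdicResidue n y := by
  rw [sub_eq_add_neg, nAdicResidue_add hn hx hy.neg, nAdicResidue_neg hn hy, sub_eq_add_neg]

theorem nAdicResidue_zpow_mul (hn : n ≠ 0) (s : ℤ) {x : ℝ} (hx : IsNAdic n x) :
    nAdicResidue n ((n : ℝ) ^ s * x) = nAdicResidue n x := by
  obtain ⟨a, k, rfl⟩ := hx
  rw [zpow_mul_div_pow hn, nAdicResidue_div_pow hn, nAdicResidue_div_pow hn]
  simp [natCast_eq_one_zmod_sub_one hn]

theorem circle_coe_eq_coe_iff {x y : ℝ} : (x : Circle) = y ↔ ∃ z : ℤ, x = y + z := by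
  rw [QuotientAddGroup.eq_iff_sub_mem, AddSubgroup.mem_zmultiples_iff]
  refine exists_congr fun z => ?_
  rw [zsmul_eq_mul, mul_one]
  constructor <;> intro h <;> linarith

theorem IsLift.pow {f : Circle ≃ₜ Circle} {F : ℝ → ℝ} (hF : IsLift f F) (k : ℕ) :
    IsLift (f ^ k) F^[k] := by
  induction k with
  | zero => exact fun _ => rfl
  | succ k ih =>
    intro x
    rw [pow_succ, Function.iterate_succ_apply, ← ih (F x), ← hF x]
    rfl

theorem IsLift.eq_one_iff {f : Circle ≃ₜ Circle} {F : ℝ → ℝ} (hF : IsLift f F) :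
    f = 1 ↔ ∀ x, ∃ z : ℤ, F x = x + z := by
  simp only [← circle_coe_eq_coe_iff, Homeomorph.ext_iff]
  refine QuotientAddGroup.mk_surjective.forall.trans (forall_congr' fun x => ?_)
  rw [← hF x]
  rfl

theorem IsLift.mapsTo_isNAdic (hn : n ≠ 0) {f : Circle ≃ₜ Circle} {F : ℝ → ℝ}
    (hF : IsLift f F) (hf : MapsTo f (nAdicPoints n) (nAdicPoints n)) :
    MapsTo F {x | IsNAdic n x} {x | IsNAdic n x} := by
  intro x hx
  obtain ⟨y, hy, hxy⟩ := hf ⟨x, hx, rfl⟩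
  obtain ⟨z, hz⟩ := circle_coe_eq_coe_iff.mp ((hF x).symm.trans hxy)
  rw [mem_ofPred_eq, hz]
  exact hy.add hn (isNAdic_intCast z)

theorem nAdicResidue_sub_eq_of_sub_eq_zpow_mul (hn : n ≠ 0) {x y x' y' : ℝ} {s : ℤ}
    (hx : IsNAdic n x) (hy : IsNAdic n y) (hx' : IsNAdic n x') (hy' : IsNAdic n y')
    (h : y' - y = (n : ℝ) ^ s * (x' - x)) :
    nAdicResidue n (y' - x') = nAdicResidue n (y - x) := by
  have key := congrArg (nAdicResidue n) h
  rw [nAdicResidue_zpow_mul hn s (hx'.sub hn hx), nAdicResidue_sub hn hy' hy,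
    nAdicResidue_sub hn hx' hx] at key
  rw [nAdicResidue_sub hn hy' hx', nAdicResidue_sub hn hy hx]
  linear_combination key

theorem nAdicResidue_map_sub_self_of_mem_Icc (hn : n ≠ 0) {F : ℝ → ℝ}
    (hF : MapsTo F {x | IsNAdic n x} {x | IsNAdic n x}) (hPA : PiecewiseNAffine n F)
    {x : ℝ} (hx : x ∈ Icc 0 1) (hxn : IsNAdic n x) :
    nAdicResidue n (F x - x) = nAdicResidue n (F 0) := by
  obtain ⟨-, m, t, slope, c, -, ht0, htm, ht_lt, ht_adic, hF_affine⟩ := hPA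
  have ht_nonneg : ∀ i ≤ m, 0 ≤ t i := by
    intro i
    induction i with
    | zero => simp [ht0]
    | succ i ih => intro hi; linarith [ih (by omega), ht_lt i (by omega)]
  suffices ∀ i ≤ m, ∀ x ∈ Icc 0 (t i), IsNAdic n x →
      nAdicResidue n (F x - x) = nAdicResidue n (F 0) from this m le_rfl x (htm ▸ hx) hxn
  intro i
  induction i with
  | zero =>
    intro _ x hx _
    obtain rfl : x = 0 := by simp_all
    rw [sub_zero]
  | succ i ih =>
    intro hi x hx hxn
    rcases le_or_gt x (t i) with hxi | hxi
    · exact ih (by omega) x ⟨hx.1, hxi⟩ hxn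
    have hti : IsNAdic n (t i) := ht_adic i (by omega)
    have hpiece : ∀ y ∈ Icc (t i) (t (i + 1)), F y = (n : ℝ) ^ slope i * y + c i :=
      hF_affine i (by omega)
    rw [← ih (by omega) (t i) ⟨ht_nonneg i (by omega), le_rfl⟩ hti]
    refine nAdicResidue_sub_eq_of_sub_eq_zpow_mul hn (s := slope i) hti (hF hti) hxn (hF hxn) ?_
    rw [hpiece x ⟨hxi.le, hx.2⟩, hpiece (t i) ⟨le_rfl, (ht_lt i (by omega)).le⟩]
    ring

theorem nAdicResidue_map_sub_self (hn : n ≠ 0) (G : CircleDeg1Lift)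
    (hG : MapsTo G {x | IsNAdic n x} {x | IsNAdic n x}) (hPA : PiecewiseNAffine n G)
    {x : ℝ} (hx : IsNAdic n x) : nAdicResidue n (G x - x) = nAdicResidue n (G 0) := by
  rw [← G.map_fract_sub_fract_eq x]
  refine nAdicResidue_map_sub_self_of_mem_Icc hn hG hPA
    ⟨Int.fract_nonneg x, (Int.fract_lt_one x).le⟩ ?_
  exact hx.sub hn (isNAdic_intCast _)

theorem nAdicResidue_iterate_sub_self (hn : n ≠ 0) {F : ℝ → ℝ}
    (hF : MapsTo F {x | IsNAdic n x} {x | IsNAdic n x}) {c : ZMod (n - 1)}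
    (hc : ∀ x, IsNAdic n x → nAdicResidue n (F x - x) = c) (k : ℕ) {x : ℝ}
    (hx : IsNAdic n x) :
    nAdicResidue n (F^[k] x - x) = k * c := by
  induction k with
  | zero => simpa using nAdicResidue_intCast hn 0
  | succ k ih =>
    have hk : IsNAdic n (F^[k] x) := hF.iterate k hx
    have hsplit : F^[k + 1] x - x = (F (F^[k] x) - F^[k] x) + (F^[k] x - x) := by
      rw [Function.iterate_succ_apply']
      ring
    rw [hsplit, nAdicResidue_add hn ((hF hk).sub hn hk) (hk.sub hn hx), hc _ hk, ih]
    push_cast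
    ring

end

/-- Each `z` with `G x = x + z` equals the translation number of `G`, hence so do all of them. -/
theorem _root_.CircleDeg1Lift.exists_int_forall_eq_add (G : CircleDeg1Lift)
    (h : ∀ x, ∃ z : ℤ, G x = x + z) : ∃ d : ℤ, ∀ x, G x = x + d := by
  obtain ⟨d, hd⟩ := h 0
  refine ⟨d, fun x => ?_⟩
  obtain ⟨z, hz⟩ := h x
  rwa [← G.translationNumber_of_eq_add_int hz, G.translationNumber_of_eq_add_int hd] at hz

theorem IsLift.circleDeg1Lift_pow {f : Circle ≃ₜ Circle} {G : CircleDeg1Lift} (hG : IsLift f G)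
    (k : ℕ) : IsLift (f ^ k) ⇑(G ^ k) := by
  rw [CircleDeg1Lift.coe_pow]
  exact hG.pow k

theorem IsLift.exists_int_pow_orderOf_eq_add {f : Circle ≃ₜ Circle} {G : CircleDeg1Lift}
    (hG : IsLift f G) : ∃ d : ℤ, ∀ x, (G ^ orderOf f) x = x + d :=
  (G ^ orderOf f).exists_int_forall_eq_add
    ((hG.circleDeg1Lift_pow _).eq_one_iff.mp (pow_orderOf_eq_one f))

/-- If `g = gcd(m, d)` and `m = g * k`, then `G ^ k` is the translation by `d / g`, because its
`g`-th power is the translation by `d`; so `f ^ k = 1` and `g = 1`. -/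
theorem IsLift.isCoprime_orderOf {f : Circle ≃ₜ Circle} {G : CircleDeg1Lift} (hG : IsLift f G)
    (hf : IsOfFinOrder f) {d : ℤ} (hd : ∀ x, (G ^ orderOf f) x = x + d) :
    IsCoprime (orderOf f : ℤ) d := by
  set m := orderOf f
  set g := Int.gcd m d
  have hm : 0 < m := hf.orderOf_pos
  have hg : 0 < g := Int.gcd_pos_of_ne_zero_left _ (by omega)
  obtain ⟨k, hk⟩ : g ∣ m := Int.natCast_dvd_natCast.mp (Int.gcd_dvd_left ..)
  obtain ⟨e, he⟩ : (g : ℤ) ∣ d := Int.gcd_dvd_right ..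
  have hGk : ∀ x, (G ^ k) x = x + e := by
    intro x
    rw [← (G ^ k).iterate_pos_eq_iff hg, ← CircleDeg1Lift.coe_pow, ← pow_mul, mul_comm,
      ← hk, hd, he]
    push_cast
    ring
  have hfk : f ^ k = 1 := (hG.circleDeg1Lift_pow k).eq_one_iff.mpr fun x => ⟨e, hGk x⟩
  have hmk : m ∣ k := orderOf_dvd_of_pow_eq_one hfk
  rw [Int.isCoprime_iff_gcd_eq_one]
  have hk0 : 0 < k := Nat.pos_of_mul_pos_left (hk ▸ hm)
  nlinarith [Nat.le_of_dvd hk0 hmk]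

theorem _root_.Nat.coprime_of_isCoprime_of_intCast_eq_mul {m k : ℕ} {d : ℤ} {c : ZMod k}
    (h : IsCoprime (m : ℤ) d) (hd : (d : ZMod k) = m * c) : Nat.Coprime m k := by
  obtain ⟨t, ht⟩ : (k : ℤ) ∣ d - m * (c.cast : ℤ) := by
    rw [← ZMod.intCast_zmod_eq_zero_iff_dvd]
    push_cast [ZMod.intCast_zmod_cast, hd]
    ring
  have hdk : d + m * -(c.cast : ℤ) = k * t := by linarith
  rw [← IsCoprime.add_mul_left_right_iff (z := -(c.cast : ℤ)), hdk] at h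
  exact Nat.isCoprime_iff_coprime.mp h.of_mul_right_left

theorem _root_.Nat.Coprime.exists_dvd_mul_add_one {m k : ℕ} (hm : 0 < m) (h : Nat.Coprime m k) :
    ∃ l, m ∣ l * k + 1 := by
  have : NeZero m := ⟨hm.ne'⟩
  refine ⟨(-(k : ZMod m)⁻¹).val, ?_⟩
  rw [← ZMod.natCast_eq_zero_iff]
  push_cast [ZMod.natCast_zmod_val]
  rw [neg_mul, mul_comm, ZMod.coe_mul_inv_eq_one k h.symm, neg_add_cancel]

/-- Let `n ≥ 2`.  If `f ∈ T_n` has finite order `m`, then there exists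
a nonnegative integer `l` such that `m` divides `l(n-1)+1`. -/
theorem order_of_torsion_divides (n : ℕ) (hn : 2 ≤ n)
    (f : Circle ≃ₜ Circle) (hf : f ∈ TnSet n) (hfin : IsOfFinOrder f)
    (m : ℕ) (hm : orderOf f = m) :
    ∃ l : ℕ, m ∣ l * (n - 1) + 1 := by
  obtain ⟨hf_adic, F, hF_mono, hF_lift, hF_pa⟩ := hf
  subst hm
  have hn0 : n ≠ 0 := by omega
  let G : CircleDeg1Lift := ⟨⟨F, hF_mono.monotone⟩, hF_pa.1⟩
  have hG_adic : MapsTo G {x | IsNAdic n x} {x | IsNAdic n x} :=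
    hF_lift.mapsTo_isNAdic hn0 (mapsTo_iff_image_subset.mpr hf_adic.subset)
  obtain ⟨d, hd⟩ := IsLift.exists_int_pow_orderOf_eq_add (G := G) hF_lift
  have hd_residue : (d : ZMod (n - 1)) = orderOf f * nAdicResidue n (G 0) := by
    have := nAdicResidue_iterate_sub_self hn0 hG_adic
      (fun _ hx => nAdicResidue_map_sub_self hn0 G hG_adic hF_pa hx) (orderOf f)
      (isNAdic_intCast 0)
    rwa [Int.cast_zero, ← CircleDeg1Lift.coe_pow, hd, zero_add, sub_zero,
      nAdicResidue_intCast hn0] at this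
  exact Nat.Coprime.exists_dvd_mul_add_one hfin.orderOf_pos
    (Nat.coprime_of_isCoprime_of_intCast_eq_mul (hF_lift.isCoprime_orderOf hfin hd) hd_residue)

end ThompsonPaper
end
end

section
/- For every integer n ≥ 2 there exists an injective group homomorphism from T_n into T_2 = T. -/
/-!
`T_n` embeds in `T` by conjugation with a single circle homeomorphism. Replacing every `n`-ary
caret of the tree of standard `n`-adic intervals by a right comb of `n - 1` binary carets turns
standard `n`-adic intervals into standard dyadic ones. This defines an increasing bijection
`comb n` of `ℝ` commuting with `x ↦ x + 1`: on `[0, 1]` it is the supremum of its values at the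
`n`-adic points, it maps the `n`-adic rationals onto the dyadic ones, so its range is dense and it
is continuous, and it is self-similar: on every standard `n`-adic interval it is an affine copy of
itself on `[0, 1]`, scaled by a power of `2`.

An element of `T_n` has a lift that, for `N` large, maps every interval `[q, q + 1] / n ^ N`
affinely onto a standard `n`-adic interval. By self-similarity the conjugate lift is then affine
with slope a power of `2` on the image of each such interval, and these images have dyadic
endpoints.
-/

noncomputable section

namespace ThompsonPaper

/-- Thompson's group `T_n`, as a subgroup of the homeomorphism group of the circle.
(The set `TnSet n` is closed under the group operations, so this subgroup has exactly
`TnSet n` as its underlying set.) -/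
def Tn (n : ℕ) : Subgroup (Circle ≃ₜ Circle) := Subgroup.closure (TnSet n)

open Set Filter

/-- The `n`-ary caret is replaced by a right comb of `n - 1` binary carets: the digit `d < n - 1`
is sent to `[1 - 2⁻¹ ^ d, 1 - 2⁻¹ ^ (d + 1)]`, the last digit `n - 1` to `[1 - 2⁻¹ ^ (n - 1), 1]`. -/
def combStart (d : ℕ) : ℝ := 1 - 2⁻¹ ^ d

def combDepth (n d : ℕ) : ℕ := min (d + 1) (n - 1)

def combWidth (n d : ℕ) : ℝ := 2⁻¹ ^ combDepth n d

lemma combStart_add_combWidth {n d : ℕ} (hd : d + 1 ≤ n - 1) :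
    combStart d + combWidth n d = combStart (d + 1) := by
  rw [combWidth, combDepth, min_eq_left hd, combStart, combStart, pow_succ]
  ring

lemma combStart_add_combWidth_last (n : ℕ) : combStart (n - 1) + combWidth n (n - 1) = 1 := by
  rw [combWidth, combDepth, min_eq_right (Nat.le_succ _), combStart]
  ring

lemma combStart_add_combWidth_mul_div {n d : ℕ} (hd : d ≤ n - 1) (x : ℝ) (m : ℕ) :
    combStart d + combWidth n d * (x / 2 ^ m) =
      (((2 ^ d - 1) * 2 ^ (combDepth n d - d + m) : ℕ) + x) / 2 ^ (combDepth n d + m) := by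
  obtain ⟨e, he⟩ : ∃ e, combDepth n d = d + e := ⟨combDepth n d - d, by simp [combDepth]; omega⟩
  rw [combStart, combWidth, he, Nat.add_sub_cancel_left, inv_pow, inv_pow]
  push_cast [Nat.one_le_two_pow]
  field_simp
  ring

/-- `combLevel n k a` is the image of `a / n ^ k`; the leading base-`n` digit `d` of `a` selects
the block of the comb. -/
def combLevel (n : ℕ) : ℕ → ℕ → ℝ
  | 0, a => min (a : ℝ) 1
  | k + 1, a =>
      let d := min (a / n ^ k) (n - 1)
      combStart d + combWidth n d * combLevel n k (a - d * n ^ k)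

lemma combLevel_zero_right (n k : ℕ) : combLevel n k 0 = 0 := by
  induction k with
  | zero => simp [combLevel]
  | succ k ih => simp [combLevel, ih, combStart]

lemma combLevel_succ_mul_add {n k d r : ℕ} (hn : 0 < n) (hd : d ≤ n - 1)
    (hr : r < n ^ k ∨ d = n - 1) :
    combLevel n (k + 1) (d * n ^ k + r) = combStart d + combWidth n d * combLevel n k r := by
  have hpos : 0 < n ^ k := Nat.pow_pos hn
  have hdigit : min ((d * n ^ k + r) / n ^ k) (n - 1) = d := by
    rw [mul_comm, Nat.mul_add_div hpos]
    rcases hr with hr | rfl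
    · rw [Nat.div_eq_of_lt hr]; omega
    · exact min_eq_right (Nat.le_add_right _ _)
  simp only [combLevel, hdigit, Nat.add_sub_cancel_left]

lemma combLevel_pow {n : ℕ} (hn : 0 < n) (k : ℕ) : combLevel n k (n ^ k) = 1 := by
  induction k with
  | zero => simp [combLevel]
  | succ k ih =>
    have hsplit : n ^ (k + 1) = (n - 1) * n ^ k + n ^ k := by
      rw [pow_succ, ← Nat.succ_mul, Nat.succ_eq_add_one, Nat.sub_add_cancel hn, mul_comm]
    rw [hsplit, combLevel_succ_mul_add hn le_rfl (Or.inr rfl), ih, mul_one,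
      combStart_add_combWidth_last]

lemma combLevel_succ_mul_add_of_le {n k d r : ℕ} (hn : 0 < n) (hd : d ≤ n - 1) (hr : r ≤ n ^ k) :
    combLevel n (k + 1) (d * n ^ k + r) = combStart d + combWidth n d * combLevel n k r := by
  rcases hr.lt_or_eq with hr | rfl
  · exact combLevel_succ_mul_add hn hd (Or.inl hr)
  rcases hd.lt_or_eq with hd | rfl
  · rw [← Nat.succ_mul, combLevel_pow hn, mul_one, ← add_zero ((d + 1) * n ^ k),
      combLevel_succ_mul_add hn hd (Or.inl (Nat.pow_pos hn)), combLevel_zero_right, mul_zero,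
      add_zero, combStart_add_combWidth (by omega)]
  · exact combLevel_succ_mul_add hn le_rfl (Or.inr rfl)

lemma exists_digit_decomposition {n k a : ℕ} (hn : 0 < n) (ha : a < n ^ (k + 1)) :
    ∃ d r, d ≤ n - 1 ∧ r < n ^ k ∧ a = d * n ^ k + r := by
  have hpos : 0 < n ^ k := Nat.pow_pos hn
  refine ⟨a / n ^ k, a % n ^ k, ?_, Nat.mod_lt _ hpos, by rw [mul_comm, Nat.div_add_mod]⟩
  have : a / n ^ k < n := (Nat.div_lt_iff_lt_mul hpos).2 (by rwa [pow_succ'] at ha)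
  omega

lemma combLevel_cell {n : ℕ} (hn : 2 ≤ n) {k a : ℕ} (ha : a < n ^ k) :
    ∃ c m : ℕ, k ≤ m ∧ combLevel n k a = c / 2 ^ m ∧ combLevel n k (a + 1) = (c + 1) / 2 ^ m := by
  induction k generalizing a with
  | zero =>
    obtain rfl : a = 0 := by simpa using ha
    exact ⟨0, 0, le_rfl, by simp [combLevel], by simp [combLevel]⟩
  | succ k ih =>
    obtain ⟨d, r, hd, hr, rfl⟩ := exists_digit_decomposition (by omega) ha
    obtain ⟨c, m, hkm, hc, hc1⟩ := ih hr
    refine ⟨(2 ^ d - 1) * 2 ^ (combDepth n d - d + m) + c, combDepth n d + m,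
      by simp only [combDepth]; omega, ?_, ?_⟩
    · rw [combLevel_succ_mul_add_of_le (by omega) hd hr.le, hc,
        combStart_add_combWidth_mul_div hd]
      push_cast; rfl
    · rw [add_assoc, combLevel_succ_mul_add_of_le (by omega) hd hr, hc1,
        combStart_add_combWidth_mul_div hd]
      push_cast; ring

lemma combLevel_lt_succ {n : ℕ} (hn : 2 ≤ n) {k a : ℕ} (ha : a < n ^ k) :
    combLevel n k a < combLevel n k (a + 1) := by
  obtain ⟨c, m, -, hc, hc1⟩ := combLevel_cell hn ha
  rw [hc, hc1]
  gcongr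
  linarith

lemma combLevel_strictMonoOn {n : ℕ} (hn : 2 ≤ n) (k : ℕ) :
    StrictMonoOn (combLevel n k) (Iic (n ^ k)) :=
  strictMonoOn_Iic_of_lt_succ fun _ ha => combLevel_lt_succ hn ha

lemma combLevel_mem_Icc {n : ℕ} (hn : 2 ≤ n) {k a : ℕ} (ha : a ≤ n ^ k) :
    combLevel n k a ∈ Icc 0 1 := by
  have hmono := (combLevel_strictMonoOn hn k).monotoneOn
  constructor
  · simpa [combLevel_zero_right] using hmono (Nat.zero_le _) ha (Nat.zero_le a)
  · simpa [combLevel_pow (by omega : 0 < n)] using hmono ha (le_refl (n ^ k)) ha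

lemma combLevel_mul_pow_add {n : ℕ} (hn : 2 ≤ n) {k j a b : ℕ} (ha : a < n ^ k) (hb : b ≤ n ^ j) :
    combLevel n (k + j) (a * n ^ j + b) =
      combLevel n k a + (combLevel n k (a + 1) - combLevel n k a) * combLevel n j b := by
  induction k generalizing a with
  | zero =>
    obtain rfl : a = 0 := by simpa using ha
    simp [combLevel]
  | succ k ih =>
    obtain ⟨d, r, hd, hr, rfl⟩ := exists_digit_decomposition (by omega) ha
    have hrb : r * n ^ j + b ≤ n ^ (k + j) := by
      calc r * n ^ j + b ≤ (r + 1) * n ^ j := by rw [add_one_mul]; omega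
        _ ≤ n ^ k * n ^ j := Nat.mul_le_mul_right _ hr
        _ = n ^ (k + j) := (pow_add _ _ _).symm
    have hsplit : (d * n ^ k + r) * n ^ j + b = d * n ^ (k + j) + (r * n ^ j + b) := by ring
    rw [Nat.add_right_comm, hsplit, combLevel_succ_mul_add_of_le (by omega) hd hrb, ih hr,
      combLevel_succ_mul_add_of_le (by omega) hd hr.le, Nat.add_assoc,
      combLevel_succ_mul_add_of_le (by omega) hd hr]
    ring

lemma combLevel_mul_pow {n : ℕ} (hn : 2 ≤ n) {k a : ℕ} (ha : a ≤ n ^ k) (j : ℕ) :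
    combLevel n (k + j) (a * n ^ j) = combLevel n k a := by
  rcases ha.lt_or_eq with ha | rfl
  · simpa [combLevel_zero_right] using combLevel_mul_pow_add hn ha (Nat.zero_le (n ^ j))
  · rw [← pow_add, combLevel_pow (by omega), combLevel_pow (by omega)]

lemma combLevel_le_combLevel {n : ℕ} (hn : 2 ≤ n) {k j a b : ℕ} (ha : a ≤ n ^ k) (hb : b ≤ n ^ j)
    (hab : (a : ℝ) / n ^ k ≤ b / n ^ j) : combLevel n k a ≤ combLevel n j b := by
  have hcross : a * n ^ j ≤ b * n ^ k := by
    rw [div_le_div_iff₀ (by positivity) (by positivity)] at hab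
    exact_mod_cast hab
  rw [← combLevel_mul_pow hn ha j, ← combLevel_mul_pow hn hb k, add_comm j k]
  refine (combLevel_strictMonoOn hn (k + j)).monotoneOn ?_ ?_ hcross
  · simpa [pow_add] using Nat.mul_le_mul_right (n ^ j) ha
  · simpa [pow_add, mul_comm] using Nat.mul_le_mul_right (n ^ k) hb

lemma isNAdic_two_combLevel {n : ℕ} (hn : 2 ≤ n) {k a : ℕ} (ha : a ≤ n ^ k) :
    IsNAdic 2 (combLevel n k a) := by
  rcases ha.lt_or_eq with ha | rfl
  · obtain ⟨c, m, -, hc, -⟩ := combLevel_cell hn ha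
    exact ⟨c, m, by rw [hc]; norm_num⟩
  · exact ⟨1, 0, by rw [combLevel_pow (by omega)]; simp⟩

lemma exists_mem_Ico_of_le_of_lt {α : Type*} [LinearOrder α] (t : ℕ → α) {x : α} {m : ℕ}
    (h0 : t 0 ≤ x) (hm : x < t m) : ∃ i < m, x ∈ Ico (t i) (t (i + 1)) := by
  induction m with
  | zero => exact absurd h0 hm.not_ge
  | succ m ih =>
    by_cases h : t m ≤ x
    · exact ⟨m, lt_add_one m, h, hm⟩
    · obtain ⟨i, hi, hx⟩ := ih (not_le.1 h)
      exact ⟨i, hi.trans (lt_add_one m), hx⟩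

-- The level-`j` cells are standard dyadic intervals of length at most `2⁻¹ ^ j`.
lemma exists_combLevel_eq {n : ℕ} (hn : 2 ≤ n) {j b : ℕ} (hb : b ≤ 2 ^ j) :
    ∃ k a, a ≤ n ^ k ∧ combLevel n k a = b / 2 ^ j := by
  rcases hb.lt_or_eq with hb | rfl
  swap
  · exact ⟨0, 1, by simp, by simp [combLevel]⟩
  have hy : (b : ℝ) / 2 ^ j < 1 := by rw [div_lt_one (by positivity)]; exact_mod_cast hb
  obtain ⟨a, ha, hlo, hhi⟩ := exists_mem_Ico_of_le_of_lt (combLevel n j) (x := b / 2 ^ j)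
    (by rw [combLevel_zero_right]; positivity) (by rwa [combLevel_pow (by omega)])
  obtain ⟨c, m, hjm, hc, hc1⟩ := combLevel_cell hn ha
  obtain ⟨e, rfl⟩ := Nat.exists_eq_add_of_le hjm
  have hb' : (b : ℝ) / 2 ^ j = (b * 2 ^ e : ℕ) / 2 ^ (j + e) := by
    push_cast; rw [pow_add]; field_simp
  rw [hc, hb', div_le_div_iff_of_pos_right (by positivity)] at hlo
  rw [hc1, hb', div_lt_div_iff_of_pos_right (by positivity)] at hhi
  have : c = b * 2 ^ e := by
    have h1 : c ≤ b * 2 ^ e := by exact_mod_cast hlo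
    have h2 : b * 2 ^ e < c + 1 := by exact_mod_cast hhi
    omega
  exact ⟨j, a, ha.le, by rw [hc, hb', this]⟩

lemma exists_intCast_div_pow_between {n : ℕ} (hn : 1 < n) {x y : ℝ} (hxy : x < y) :
    ∃ (k : ℕ) (c : ℤ), x < c / n ^ k ∧ (c + 1) / n ^ k < y := by
  obtain ⟨k, hk⟩ := pow_unbounded_of_one_lt (2 / (y - x)) (Nat.one_lt_cast.2 hn)
  have hpos : (0 : ℝ) < n ^ k := by positivity
  have hgap : 2 < y * n ^ k - x * n ^ k := by
    rw [div_lt_iff₀ (sub_pos.2 hxy)] at hk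
    linarith
  refine ⟨k, ⌊x * n ^ k⌋ + 1, ?_, ?_⟩
  · rw [lt_div_iff₀ hpos]
    push_cast
    exact Int.lt_floor_add_one _
  · rw [div_lt_iff₀ hpos]
    push_cast
    linarith [Int.floor_le (x * n ^ k)]

lemma dense_setOf_isNAdic {n : ℕ} (hn : 1 < n) : Dense {x : ℝ | IsNAdic n x} := by
  refine dense_of_exists_between fun x y hxy => ?_
  obtain ⟨k, c, hxc, hcy⟩ := exists_intCast_div_pow_between hn hxy
  exact ⟨c / n ^ k, ⟨c, k, rfl⟩, hxc, lt_of_le_of_lt (by gcongr; linarith) hcy⟩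

lemma IsNAdic.add_intCast {n : ℕ} (hn : n ≠ 0) {x : ℝ} (hx : IsNAdic n x) (m : ℤ) :
    IsNAdic n (x + m) := by
  obtain ⟨a, k, rfl⟩ := hx
  exact ⟨a + m * n ^ k, k, by push_cast; field_simp⟩

lemma IsNAdic.fract {n : ℕ} (hn : n ≠ 0) {x : ℝ} (hx : IsNAdic n x) : IsNAdic n (Int.fract x) := by
  simpa [Int.fract, sub_eq_add_neg] using hx.add_intCast hn (-⌊x⌋)

lemma IsNAdic.exists_nat_of_mem_Icc {n : ℕ} (hn : n ≠ 0) {x : ℝ} (hx : IsNAdic n x)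
    (h : x ∈ Icc 0 1) : ∃ k a : ℕ, a ≤ n ^ k ∧ x = a / n ^ k := by
  obtain ⟨a, k, rfl⟩ := hx
  have hpos : (0 : ℝ) < n ^ k := by positivity
  obtain ⟨h0, h1⟩ := h
  rw [le_div_iff₀ hpos, zero_mul] at h0
  rw [div_le_one hpos] at h1
  lift a to ℕ using by exact_mod_cast h0
  exact ⟨k, a, by exact_mod_cast h1, by rw [Int.cast_natCast]⟩

lemma IsNAdic.eventually_eq_div_pow {n : ℕ} (hn : n ≠ 0) {x : ℝ} (hx : IsNAdic n x) :
    ∀ᶠ N in atTop, ∃ a : ℤ, x = a / n ^ N := by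
  obtain ⟨a, k, rfl⟩ := hx
  filter_upwards [eventually_ge_atTop k] with N hN
  obtain ⟨e, rfl⟩ := Nat.exists_eq_add_of_le hN
  exact ⟨a * n ^ e, by push_cast; rw [pow_add]; field_simp⟩

lemma IsNAdic.eventually_eq_div_pow_sub {n : ℕ} (hn : n ≠ 0) {x : ℝ} (hx : IsNAdic n x) (s : ℤ) :
    ∀ᶠ N : ℕ in atTop, ∃ K : ℕ, (N : ℤ) = K + s ∧ ∃ a : ℤ, x = a / n ^ K := by
  obtain ⟨K₀, hK₀⟩ := eventually_atTop.1 (hx.eventually_eq_div_pow hn)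
  filter_upwards [eventually_ge_atTop (K₀ + s.toNat)] with N hN
  exact ⟨(N - s).toNat, by omega, hK₀ _ (by omega)⟩

lemma nAdicPoints_eq_image (n : ℕ) : nAdicPoints n = ((↑) : ℝ → Circle) '' {x | IsNAdic n x} := by
  ext p
  simp [nAdicPoints, eq_comm]

lemma isNAdic_of_coe_mem_nAdicPoints {n : ℕ} (hn : n ≠ 0) {x : ℝ}
    (hx : (x : Circle) ∈ nAdicPoints n) : IsNAdic n x := by
  obtain ⟨y, hy, hxy⟩ := hx
  obtain ⟨m, hm⟩ := AddSubgroup.mem_zmultiples_iff.1 (QuotientAddGroup.eq.1 hxy)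
  convert hy.add_intCast hn (-m) using 1
  push_cast
  linarith [show (m : ℝ) = -x + y by simpa using hm]

def combBelow (n : ℕ) (x : ℝ) : Set ℝ :=
  {y | ∃ k a, a ≤ n ^ k ∧ (a : ℝ) / n ^ k ≤ x ∧ combLevel n k a = y}

def unitComb (n : ℕ) (x : ℝ) : ℝ := sSup (combBelow n x)

lemma combBelow_nonempty (n : ℕ) {x : ℝ} (hx : 0 ≤ x) : (combBelow n x).Nonempty :=
  ⟨_, 0, 0, by simp, by simpa using hx, rfl⟩

lemma bddAbove_combBelow {n : ℕ} (hn : 2 ≤ n) (x : ℝ) : BddAbove (combBelow n x) :=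
  ⟨1, by rintro _ ⟨k, a, ha, -, rfl⟩; exact (combLevel_mem_Icc hn ha).2⟩

lemma combLevel_le_unitComb {n : ℕ} (hn : 2 ≤ n) {k a : ℕ} {x : ℝ} (ha : a ≤ n ^ k)
    (hx : (a : ℝ) / n ^ k ≤ x) : combLevel n k a ≤ unitComb n x :=
  le_csSup (bddAbove_combBelow hn x) ⟨k, a, ha, hx, rfl⟩

lemma unitComb_le_combLevel {n : ℕ} (hn : 2 ≤ n) {j b : ℕ} {x : ℝ} (hx : 0 ≤ x) (hb : b ≤ n ^ j)
    (hxb : x ≤ b / n ^ j) : unitComb n x ≤ combLevel n j b :=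
  csSup_le (combBelow_nonempty n hx) fun _ ⟨_, _, ha, hax, hy⟩ =>
    hy ▸ combLevel_le_combLevel hn ha hb (hax.trans hxb)

lemma unitComb_natCast_div_pow {n : ℕ} (hn : 2 ≤ n) {k a : ℕ} (ha : a ≤ n ^ k) :
    unitComb n (a / n ^ k) = combLevel n k a :=
  (unitComb_le_combLevel hn (by positivity) ha le_rfl).antisymm (combLevel_le_unitComb hn ha le_rfl)

lemma unitComb_nonneg {n : ℕ} (hn : 2 ≤ n) {x : ℝ} (hx : 0 ≤ x) : 0 ≤ unitComb n x := by
  simpa [combLevel_zero_right] using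
    combLevel_le_unitComb hn (k := 0) (a := 0) (Nat.zero_le _) (by simpa using hx)

lemma unitComb_add_div_pow_le {n : ℕ} (hn : 2 ≤ n) {k a : ℕ} (ha : a < n ^ k) {u : ℝ}
    (hu : u ∈ Icc 0 1) : unitComb n ((a + u) / n ^ k) ≤
      combLevel n k a + (combLevel n k (a + 1) - combLevel n k a) * unitComb n u := by
  have hW : 0 ≤ combLevel n k (a + 1) - combLevel n k a := sub_nonneg.2 (combLevel_lt_succ hn ha).le
  have hpos : (0 : ℝ) < n ^ k := by positivity
  refine csSup_le (combBelow_nonempty n (by have := hu.1; positivity)) ?_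
  rintro _ ⟨j, b, hb, hbx, rfl⟩
  have hposj : (0 : ℝ) < n ^ j := by positivity
  rw [div_le_div_iff₀ hposj hpos] at hbx
  rcases le_or_gt (b * n ^ k) (a * n ^ j) with hle | hlt
  · have hba : combLevel n j b ≤ combLevel n k a := by
      refine combLevel_le_combLevel hn hb ha.le ?_
      rw [div_le_div_iff₀ hposj hpos]
      exact_mod_cast hle
    exact hba.trans (le_add_of_nonneg_right (mul_nonneg hW (unitComb_nonneg hn hu.1)))
  · obtain ⟨r, hr⟩ := Nat.exists_eq_add_of_lt hlt
    have hrR : (b : ℝ) * n ^ k = a * n ^ j + (r + 1) := by exact_mod_cast hr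
    have hru : ((r + 1 : ℕ) : ℝ) / n ^ j ≤ u := by
      rw [div_le_iff₀ hposj]; push_cast; nlinarith
    have hrj : r + 1 ≤ n ^ j := by
      have := hru.trans hu.2
      rw [div_le_one hposj] at this
      exact_mod_cast this
    rw [← combLevel_mul_pow hn hb k, add_comm j k, hr, Nat.add_assoc,
      combLevel_mul_pow_add hn ha hrj]
    gcongr
    exact combLevel_le_unitComb hn hrj hru

lemma le_unitComb_add_div_pow {n : ℕ} (hn : 2 ≤ n) {k a : ℕ} (ha : a < n ^ k) {u : ℝ}
    (hu : 0 ≤ u) : combLevel n k a + (combLevel n k (a + 1) - combLevel n k a) * unitComb n u ≤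
      unitComb n ((a + u) / n ^ k) := by
  have hW : 0 < combLevel n k (a + 1) - combLevel n k a := sub_pos.2 (combLevel_lt_succ hn ha)
  rw [← le_sub_iff_add_le', mul_comm, ← le_div_iff₀ hW]
  refine csSup_le (combBelow_nonempty n hu) ?_
  rintro _ ⟨j, b, hb, hbu, rfl⟩
  rw [le_div_iff₀ hW, mul_comm, le_sub_iff_add_le', ← combLevel_mul_pow_add hn ha hb]
  refine combLevel_le_unitComb hn ?_ ?_
  · calc a * n ^ j + b ≤ (a + 1) * n ^ j := by rw [add_one_mul]; omega
      _ ≤ n ^ k * n ^ j := Nat.mul_le_mul_right _ ha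
      _ = n ^ (k + j) := (pow_add _ _ _).symm
  · have hpt : ((a * n ^ j + b : ℕ) : ℝ) / n ^ (k + j) = (a + b / n ^ j) / n ^ k := by
      push_cast; rw [pow_add]; field_simp
    rw [hpt]
    gcongr

lemma unitComb_add_div_pow {n : ℕ} (hn : 2 ≤ n) {k a : ℕ} (ha : a < n ^ k) {u : ℝ}
    (hu : u ∈ Icc 0 1) : unitComb n ((a + u) / n ^ k) =
      combLevel n k a + (combLevel n k (a + 1) - combLevel n k a) * unitComb n u :=
  (unitComb_add_div_pow_le hn ha hu).antisymm (le_unitComb_add_div_pow hn ha hu.1)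

lemma unitComb_strictMonoOn {n : ℕ} (hn : 2 ≤ n) : StrictMonoOn (unitComb n) (Icc 0 1) := by
  rintro x ⟨hx0, -⟩ y ⟨-, hy1⟩ hxy
  obtain ⟨k, c, hxc, hcy⟩ := exists_intCast_div_pow_between hn hxy
  have hpos : (0 : ℝ) < n ^ k := by positivity
  have hc0 : (0 : ℝ) ≤ c := by
    have := hx0.trans hxc.le
    rwa [le_div_iff₀ hpos, zero_mul] at this
  lift c to ℕ using by exact_mod_cast hc0
  rw [Int.cast_natCast] at hxc hcy
  have hck : c + 1 ≤ n ^ k := by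
    have := hcy.le.trans hy1
    rw [div_le_one hpos] at this
    exact_mod_cast this
  calc unitComb n x ≤ combLevel n k c := unitComb_le_combLevel hn hx0 (by omega) hxc.le
    _ < combLevel n k (c + 1) := combLevel_lt_succ hn (by omega)
    _ ≤ unitComb n y := combLevel_le_unitComb hn hck (by push_cast; exact hcy.le)

lemma unitComb_zero {n : ℕ} (hn : 2 ≤ n) : unitComb n 0 = 0 := by
  simpa [combLevel_zero_right] using unitComb_natCast_div_pow hn (k := 0) (a := 0) (by simp)

lemma unitComb_one {n : ℕ} (hn : 2 ≤ n) : unitComb n 1 = 1 := by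
  simpa [combLevel] using unitComb_natCast_div_pow hn (k := 0) (a := 1) (by simp)

def comb (n : ℕ) (x : ℝ) : ℝ := ⌊x⌋ + unitComb n (Int.fract x)

lemma comb_add_intCast (n : ℕ) (x : ℝ) (m : ℤ) : comb n (x + m) = comb n x + m := by
  rw [comb, comb, Int.fract_add_intCast, Int.floor_add_intCast]
  push_cast
  ring

lemma comb_add_one (n : ℕ) (x : ℝ) : comb n (x + 1) = comb n x + 1 := by
  exact_mod_cast comb_add_intCast n x 1

lemma comb_intCast {n : ℕ} (hn : 2 ≤ n) (m : ℤ) : comb n m = m := by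
  simp [comb, unitComb_zero hn]

lemma comb_eq_unitComb {n : ℕ} (hn : 2 ≤ n) {x : ℝ} (hx : x ∈ Icc 0 1) :
    comb n x = unitComb n x := by
  rcases hx.2.lt_or_eq with h | rfl
  · simp [comb, Int.floor_eq_zero_iff.2 ⟨hx.1, h⟩, Int.fract_eq_self.2 ⟨hx.1, h⟩]
  · simpa [unitComb_one hn] using comb_intCast hn 1

lemma comb_natCast_div_pow {n : ℕ} (hn : 2 ≤ n) {k a : ℕ} (ha : a ≤ n ^ k) :
    comb n (a / n ^ k) = combLevel n k a := by
  rw [comb_eq_unitComb hn ⟨by positivity, ?_⟩, unitComb_natCast_div_pow hn ha]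
  rw [div_le_one (by positivity)]
  exact_mod_cast ha

lemma comb_strictMono {n : ℕ} (hn : 2 ≤ n) : StrictMono (comb n) := by
  intro x y hxy
  have hfract (z : ℝ) : Int.fract z ∈ Icc (0 : ℝ) 1 := ⟨Int.fract_nonneg z, (Int.fract_lt_one z).le⟩
  rcases (Int.floor_le_floor hxy.le).lt_or_eq with hlt | heq
  · have hx1 : unitComb n (Int.fract x) < 1 := by
      simpa [unitComb_one hn] using
        unitComb_strictMonoOn hn (hfract x) ⟨zero_le_one, le_rfl⟩ (Int.fract_lt_one x)
    have hy0 := unitComb_nonneg hn (Int.fract_nonneg y)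
    have hxy' : (⌊x⌋ : ℝ) + 1 ≤ ⌊y⌋ := by exact_mod_cast hlt
    rw [comb, comb]
    linarith
  · have hfxy : Int.fract x < Int.fract y := by
      rw [Int.fract, Int.fract, heq]
      linarith
    rw [comb, comb, heq]
    linarith [unitComb_strictMonoOn hn (hfract x) (hfract y) hfxy]

lemma isNAdic_comb {n : ℕ} (hn : 2 ≤ n) {x : ℝ} (hx : IsNAdic n x) : IsNAdic 2 (comb n x) := by
  obtain ⟨k, a, ha, hxa⟩ := (hx.fract (by omega)).exists_nat_of_mem_Icc (by omega)
    ⟨Int.fract_nonneg x, (Int.fract_lt_one x).le⟩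
  rw [comb, hxa, unitComb_natCast_div_pow hn ha, add_comm]
  exact (isNAdic_two_combLevel hn ha).add_intCast two_ne_zero ⌊x⌋

lemma exists_isNAdic_comb_eq {n : ℕ} (hn : 2 ≤ n) {y : ℝ} (hy : IsNAdic 2 y) :
    ∃ x, IsNAdic n x ∧ comb n x = y := by
  obtain ⟨j, b, hb, hyb⟩ := (hy.fract two_ne_zero).exists_nat_of_mem_Icc two_ne_zero
    ⟨Int.fract_nonneg y, (Int.fract_lt_one y).le⟩
  obtain ⟨k, a, ha, hab⟩ := exists_combLevel_eq hn hb
  have hx : IsNAdic n (a / n ^ k) := ⟨a, k, by rw [Int.cast_natCast]⟩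
  refine ⟨a / n ^ k + ⌊y⌋, hx.add_intCast (by omega) ⌊y⌋, ?_⟩
  rw [comb_add_intCast, comb_natCast_div_pow hn ha, hab]
  push_cast at hyb
  rw [← hyb, Int.fract_add_floor]

lemma image_comb_setOf_isNAdic {n : ℕ} (hn : 2 ≤ n) :
    comb n '' {x | IsNAdic n x} = {y | IsNAdic 2 y} := by
  refine Subset.antisymm (image_subset_iff.2 fun _ hx => isNAdic_comb hn hx) fun y hy => ?_
  obtain ⟨x, hx, hxy⟩ := exists_isNAdic_comb_eq hn hy
  exact ⟨x, hx, hxy⟩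

lemma comb_continuous {n : ℕ} (hn : 2 ≤ n) : Continuous (comb n) :=
  (comb_strictMono hn).monotone.continuous_of_denseRange <| (dense_setOf_isNAdic one_lt_two).mono <| by
    rw [← image_comb_setOf_isNAdic hn]
    exact image_subset_range _ _

lemma comb_surjective {n : ℕ} (hn : 2 ≤ n) : Function.Surjective (comb n) := fun y =>
  intermediate_value_univ (⌊y⌋ : ℝ) ((⌊y⌋ + 1 : ℤ) : ℝ) (comb_continuous hn) <| by
    rw [comb_intCast hn, comb_intCast hn]
    push_cast
    exact ⟨Int.floor_le y, (Int.lt_floor_add_one y).le⟩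

def combOrderIso (n : ℕ) (hn : 2 ≤ n) : ℝ ≃o ℝ :=
  (comb_strictMono hn).orderIsoOfSurjective _ (comb_surjective hn)

lemma combOrderIso_apply {n : ℕ} (hn : 2 ≤ n) (x : ℝ) : combOrderIso n hn x = comb n x := rfl

lemma comb_add_div_pow {n : ℕ} (hn : 2 ≤ n) (a : ℤ) (k : ℕ) :
    ∃ z : ℤ, ∀ u ∈ Icc (0 : ℝ) 1, comb n ((a + u) / n ^ k) = comb n (a / n ^ k) + 2 ^ z * comb n u := by
  have hpos : (0 : ℤ) < n ^ k := by positivity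
  obtain ⟨r, hr⟩ := Int.eq_ofNat_of_zero_le (Int.emod_nonneg a hpos.ne')
  have hrk : r < n ^ k := by exact_mod_cast hr ▸ Int.emod_lt_of_pos a hpos
  have hshift (v : ℝ) : (a + v) / n ^ k = (r + v) / n ^ k + (a / (n ^ k : ℤ) : ℤ) := by
    have hdiv := Int.emod_add_mul_ediv a (n ^ k)
    rw [hr] at hdiv
    nth_rewrite 1 [← hdiv]
    push_cast
    field_simp
    ring
  have hmem {v : ℝ} (hv : v ∈ Icc (0 : ℝ) 1) : (r + v) / n ^ k ∈ Icc (0 : ℝ) 1 := by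
    refine ⟨by have := hv.1; positivity, (div_le_one (by positivity)).2 ?_⟩
    have : (r : ℝ) + 1 ≤ n ^ k := by exact_mod_cast hrk
    linarith [hv.2]
  obtain ⟨c, m, -, hc, hc1⟩ := combLevel_cell hn hrk
  refine ⟨-m, fun u hu => ?_⟩
  have h0 := hshift 0
  rw [add_zero, add_zero] at h0
  rw [hshift, h0, comb_add_intCast, comb_add_intCast, comb_eq_unitComb hn (hmem hu),
    unitComb_add_div_pow hn hrk hu, comb_natCast_div_pow hn hrk.le, comb_eq_unitComb hn hu, hc, hc1,
    zpow_neg, zpow_natCast]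
  ring

lemma comb_conj_affine_on_cell {n : ℕ} (hn : 2 ≤ n) {F : ℝ → ℝ} {q A : ℤ} {N K : ℕ}
    (hF : ∀ u ∈ Icc (0 : ℝ) 1, F ((q + u) / n ^ N) = (A + u) / n ^ K) :
    ∃ (z : ℤ) (C : ℝ), ∀ y ∈ Icc (comb n (q / n ^ N)) (comb n ((q + 1) / n ^ N)),
      comb n (F ((combOrderIso n hn).symm y)) = 2 ^ z * y + C := by
  obtain ⟨z₁, h₁⟩ := comb_add_div_pow hn q N
  obtain ⟨z₂, h₂⟩ := comb_add_div_pow hn A K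
  refine ⟨z₂ - z₁, comb n (A / n ^ K) - 2 ^ (z₂ - z₁) * comb n (q / n ^ N), fun y hy => ?_⟩
  set e := combOrderIso n hn
  have hpos : (0 : ℝ) < n ^ N := by positivity
  set u := e.symm y * n ^ N - q
  have hxu : e.symm y = (q + u) / n ^ N := by simp only [u]; field_simp; ring
  have hu : u ∈ Icc (0 : ℝ) 1 := by
    have h0 : q / n ^ N ≤ e.symm y := e.le_symm_apply.2 hy.1
    have h1 : e.symm y ≤ (q + 1) / n ^ N := e.symm_apply_le.2 hy.2
    rw [hxu] at h0 h1
    constructor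
    · linarith [(div_le_div_iff_of_pos_right hpos).1 h0]
    · linarith [(div_le_div_iff_of_pos_right hpos).1 h1]
  have hy' : y = comb n ((q + u) / n ^ N) := by rw [← hxu]; exact (e.apply_symm_apply y).symm
  rw [hxu, hF u hu, h₂ u hu, hy', h₁ u hu, zpow_sub₀ two_ne_zero]
  field_simp
  ring

lemma map_add_intCast_of_map_add_one {f : ℝ → ℝ} (hf : ∀ x, f (x + 1) = f x + 1) (x : ℝ) (m : ℤ) :
    f (x + m) = f x + m :=
  AddConstMapClass.map_add_int (⟨f, hf⟩ : AddConstMap ℝ ℝ 1 1) x m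

lemma orderIso_symm_add_one (e : ℝ ≃o ℝ) (he : ∀ x, e (x + 1) = e x + 1) (y : ℝ) :
    e.symm (y + 1) = e.symm y + 1 :=
  e.injective (by rw [he, e.apply_symm_apply, e.apply_symm_apply])

lemma liftFun_leftRel_of_map_add_one {f : ℝ → ℝ} (hf : ∀ x, f (x + 1) = f x + 1) :
    Relator.LiftFun (QuotientAddGroup.leftRel (AddSubgroup.zmultiples (1 : ℝ)))
      (QuotientAddGroup.leftRel (AddSubgroup.zmultiples (1 : ℝ))) f f := by
  intro a b hab
  rw [QuotientAddGroup.leftRel_apply, AddSubgroup.mem_zmultiples_iff] at hab ⊢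
  obtain ⟨m, hm⟩ := hab
  obtain rfl : b = a + m := by simp only [zsmul_eq_mul, mul_one] at hm; linarith
  exact ⟨m, by rw [map_add_intCast_of_map_add_one hf]; simp⟩

def circleHomeomorph (e : ℝ ≃o ℝ) (he : ∀ x, e (x + 1) = e x + 1) : Circle ≃ₜ Circle where
  toFun := Quotient.map' e (liftFun_leftRel_of_map_add_one he)
  invFun := Quotient.map' e.symm (liftFun_leftRel_of_map_add_one (orderIso_symm_add_one e he))
  left_inv p := Quotient.inductionOn' p fun x => congrArg Quotient.mk'' (e.symm_apply_apply x)
  right_inv p := Quotient.inductionOn' p fun x => congrArg Quotient.mk'' (e.apply_symm_apply x)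
  continuous_toFun := e.continuous.quotient_map' _
  continuous_invFun := e.symm.continuous.quotient_map' _

section circleHomeomorph

variable (e : ℝ ≃o ℝ) (he : ∀ x, e (x + 1) = e x + 1)

lemma circleHomeomorph_coe (x : ℝ) : circleHomeomorph e he x = (e x : Circle) := rfl

lemma circleHomeomorph_symm_coe (x : ℝ) : (circleHomeomorph e he).symm x = (e.symm x : Circle) :=
  rfl

lemma image_circleHomeomorph_image_coe (s : Set ℝ) :
    circleHomeomorph e he '' (((↑) : ℝ → Circle) '' s) = (↑) '' (e '' s) := by
  rw [image_image, image_image]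
  rfl

lemma IsLift.conj {g : Circle ≃ₜ Circle} {F : ℝ → ℝ} (hF : IsLift g F) :
    IsLift ((circleHomeomorph e he).symm.trans (g.trans (circleHomeomorph e he)))
      (fun y => e (F (e.symm y))) := fun y => by
  simp only [Homeomorph.trans_apply, circleHomeomorph_symm_coe, hF _, circleHomeomorph_coe]

end circleHomeomorph

def combHomeomorph (n : ℕ) (hn : 2 ≤ n) : Circle ≃ₜ Circle :=
  circleHomeomorph (combOrderIso n hn) fun x => by
    rw [combOrderIso_apply, combOrderIso_apply, comb_add_one]

lemma combHomeomorph_image_nAdicPoints {n : ℕ} (hn : 2 ≤ n) :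
    combHomeomorph n hn '' nAdicPoints n = nAdicPoints 2 := by
  rw [nAdicPoints_eq_image, nAdicPoints_eq_image, combHomeomorph, image_circleHomeomorph_image_coe]
  exact congrArg _ (image_comb_setOf_isNAdic hn)

lemma IsLift.isNAdic_apply {n : ℕ} (hn : n ≠ 0) {g : Circle ≃ₜ Circle} {F : ℝ → ℝ}
    (hF : IsLift g F) (hg : g '' nAdicPoints n = nAdicPoints n) {x : ℝ} (hx : IsNAdic n x) :
    IsNAdic n (F x) :=
  isNAdic_of_coe_mem_nAdicPoints hn (by rw [← hF, ← hg]; exact mem_image_of_mem g ⟨x, hx, rfl⟩)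

lemma exists_Icc_subset_Icc_of_level {n N m : ℕ} (hn : n ≠ 0) {t : ℕ → ℝ} (ht0 : t 0 = 0)
    (htm : t m = 1) (htN : ∀ i ∈ Iic m, ∃ V : ℤ, t i = V / n ^ N) {q : ℕ} (hq : q < n ^ N) :
    ∃ i < m, Icc ((q : ℝ) / n ^ N) ((q + 1) / n ^ N) ⊆ Icc (t i) (t (i + 1)) := by
  have hpos : (0 : ℝ) < n ^ N := by positivity
  obtain ⟨i, hi, hVq, hqW⟩ := exists_mem_Ico_of_le_of_lt t (x := q / n ^ N)
    (by rw [ht0]; positivity) (by rw [htm, div_lt_one hpos]; exact_mod_cast hq)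
  obtain ⟨W, hW⟩ := htN (i + 1) hi
  rw [hW, div_lt_div_iff_of_pos_right hpos] at hqW
  have hqW' : (q : ℝ) + 1 ≤ W := by
    have : (q : ℤ) < W := by exact_mod_cast hqW
    exact_mod_cast (show (q : ℤ) + 1 ≤ W by omega)
  exact ⟨i, hi, Icc_subset_Icc hVq (by rw [hW]; gcongr)⟩

-- `N` is a common level of the breakpoints of `F` and of their images.
lemma PiecewiseNAffine.exists_level_affine_cells {n : ℕ} (hn : n ≠ 0) {F : ℝ → ℝ}
    (hF : PiecewiseNAffine n F) (hFn : ∀ x, IsNAdic n x → IsNAdic n (F x)) :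
    ∃ N : ℕ, ∀ q < n ^ N, ∃ (K : ℕ) (A : ℤ),
      ∀ u ∈ Icc (0 : ℝ) 1, F ((q + u) / n ^ N) = (A + u) / n ^ K := by
  obtain ⟨-, m, t, s, c, -, ht0, htm, htmono, htn, hFt⟩ := hF
  have hlevel : ∀ᶠ N : ℕ in atTop, (∀ i ∈ Iic m, ∃ V : ℤ, t i = V / n ^ N) ∧
      ∀ i ∈ Iio m, ∃ K : ℕ, (N : ℤ) = K + s i ∧ ∃ B : ℤ, F (t i) = B / n ^ K :=
    ((eventually_all_finite (finite_Iic m)).2 fun i hi => (htn i hi).eventually_eq_div_pow hn).and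
      ((eventually_all_finite (finite_Iio m)).2 fun i hi =>
        (hFn _ (htn i (le_of_lt hi))).eventually_eq_div_pow_sub hn (s i))
  obtain ⟨N, htN, hFN⟩ := hlevel.exists
  refine ⟨N, fun q hq => ?_⟩
  obtain ⟨i, hi, hsub⟩ := exists_Icc_subset_Icc_of_level hn ht0 htm htN hq
  obtain ⟨V, hV⟩ := htN i (le_of_lt hi)
  obtain ⟨K, hK, B, hB⟩ := hFN i hi
  have hslope : (n : ℝ) ^ s i = n ^ N / n ^ K := by
    rw [eq_div_iff (by positivity), ← zpow_natCast, ← zpow_natCast, ← zpow_add₀ (by positivity)]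
    congr 1
    omega
  have hc : c i = F (t i) - n ^ s i * t i := by
    rw [hFt i hi (t i) ⟨le_rfl, (htmono i hi).le⟩]
    ring
  refine ⟨K, B + q - V, fun u hu => ?_⟩
  have hcell : (q + u) / n ^ N ∈ Icc ((q : ℝ) / n ^ N) ((q + 1) / n ^ N) := by
    constructor <;> gcongr <;> linarith [hu.1, hu.2]
  rw [hFt i hi _ (hsub hcell), hc, hB, hV, hslope]
  push_cast
  field_simp
  ring

lemma piecewiseNAffine_of_forall_exists {n : ℕ} {F : ℝ → ℝ} (hper : ∀ x, F (x + 1) = F x + 1)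
    {m : ℕ} {t : ℕ → ℝ} (hm : 0 < m) (ht0 : t 0 = 0) (htm : t m = 1)
    (htmono : ∀ i < m, t i < t (i + 1)) (htn : ∀ i ≤ m, IsNAdic n (t i))
    (hF : ∀ i < m, ∃ (s : ℤ) (c : ℝ), ∀ x ∈ Icc (t i) (t (i + 1)), F x = n ^ s * x + c) :
    PiecewiseNAffine n F := by
  choose! s c hsc using hF
  exact ⟨hper, m, t, s, c, hm, ht0, htm, htmono, htn, hsc⟩

lemma PiecewiseNAffine.comb_conj {n : ℕ} (hn : 2 ≤ n) {F : ℝ → ℝ} (hper : ∀ x, F (x + 1) = F x + 1)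
    (hF : PiecewiseNAffine n F) (hFn : ∀ x, IsNAdic n x → IsNAdic n (F x)) :
    PiecewiseNAffine 2 (fun y => comb n (F ((combOrderIso n hn).symm y))) := by
  obtain ⟨N, hN⟩ := hF.exists_level_affine_cells (by omega) hFn
  have hpos : (0 : ℝ) < n ^ N := by positivity
  refine piecewiseNAffine_of_forall_exists (m := n ^ N) (t := fun q => comb n (q / n ^ N))
    (fun y => ?_) (by positivity) (by simpa using comb_intCast hn 0) ?_
    (fun q _ => comb_strictMono hn (by gcongr; exact lt_add_one _))
    (fun q _ => isNAdic_comb hn ⟨q, N, by push_cast; rfl⟩) fun q hq => ?_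
  · rw [orderIso_symm_add_one _ (fun x => comb_add_one n x), hper, comb_add_one]
  · simpa [div_self hpos.ne'] using comb_intCast hn 1
  · obtain ⟨K, A, hA⟩ := hN q hq
    simpa using comb_conj_affine_on_cell hn (q := q) (by simpa using hA)

lemma conj_combHomeomorph_mem_TnSet {n : ℕ} (hn : 2 ≤ n) {g : Circle ≃ₜ Circle} (hg : g ∈ TnSet n) :
    MulAut.conj (combHomeomorph n hn) g ∈ TnSet 2 := by
  obtain ⟨himage, F, hFmono, hF, hFpa⟩ := hg
  set e := combOrderIso n hn
  refine ⟨?_, fun y => e (F (e.symm y)), e.strictMono.comp (hFmono.comp e.symm.strictMono),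
    IsLift.conj e _ hF, hFpa.comb_conj hn hFpa.1 fun x => hF.isNAdic_apply (by omega) himage⟩
  have hconj : ⇑(MulAut.conj (combHomeomorph n hn) g) =
      combHomeomorph n hn ∘ g ∘ (combHomeomorph n hn).symm := rfl
  rw [hconj, image_comp, image_comp, ← combHomeomorph_image_nAdicPoints hn, Homeomorph.image_symm,
    Homeomorph.preimage_image, himage]

lemma exists_injective_hom_of_map_le {G G' : Type*} [Group G] [Group G'] {H : Subgroup G}
    {K : Subgroup G'} (f : G →* G') (hf : Function.Injective f) (hle : H.map f ≤ K) :
    ∃ φ : H →* K, Function.Injective φ :=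
  ⟨(Subgroup.inclusion hle).comp (H.equivMapOfInjective f hf).toMonoidHom,
    (Subgroup.inclusion_injective hle).comp (H.equivMapOfInjective f hf).injective⟩

/-- For every integer `n ≥ 2` there exists an injective group
homomorphism from `T_n` into `T_2 = T`. -/
theorem exists_injective_hom_Tn_to_T2 (n : ℕ) (hn : 2 ≤ n) :
    ∃ φ : Tn n →* Tn 2, Function.Injective φ := by
  refine exists_injective_hom_of_map_le (MulAut.conj (combHomeomorph n hn)).toMonoidHom
    (MulAut.conj (combHomeomorph n hn)).injective ?_
  rw [Tn, MonoidHom.map_closure]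
  exact Subgroup.closure_mono (image_subset_iff.2 fun g hg => conj_combHomeomorph_mem_TnSet hn hg)

end ThompsonPaper
end
end
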